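/- arXiv:2404.11297 — 5 statements merged into one kernel-verified Lean document; each statement's English description precedes it below -/
import Mathlib

section
/- Let G be a group with subgroups H, K satisfying H ∩ K = {e}. The map (h,k) ↦ h ▷ k, defined on Ω = {(h,k) ∈ H × K : hk ∈ KH}, is a local (partial) left action of H on K: (e,k) ∈ Ω and e ▷ k = k for all k ∈ K; and if (h₂,k) ∈ Ω, then (h₁, h₂ ▷ k) ∈ Ω if and only if (h₁h₂, k) ∈ Ω, in which case h₁ ▷ (h₂ ▷ k) = (h₁h₂) ▷ k. -/
/-! Right multiplication by `H` preserves `KH` and, because `H ∩ K = {e}`, does not change the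
`K`-factor of a `KH`-decomposition. Since `(h₁h₂)k = h₁(h₂ ▷ k)(h₂ ◁ k)` with `h₂ ◁ k ∈ H`, both the
domain condition and the `K`-factor for `(h₁h₂, k)` agree with those for `(h₁, h₂ ▷ k)`. -/

namespace Subgroup

variable {G : Type*} [Group G] {H K : Subgroup G}

theorem left_eq_of_mul_eq_mul_of_disjoint (hKH : Disjoint K H) {k₁ k₂ h₁ h₂ : G}
    (hk₁ : k₁ ∈ K) (hk₂ : k₂ ∈ K) (hh₁ : h₁ ∈ H) (hh₂ : h₂ ∈ H) (heq : k₁ * h₁ = k₂ * h₂) :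
    k₁ = k₂ :=
  congrArg (fun p => (p.1 : G))
    (mul_injective_of_disjoint hKH (a₁ := (⟨k₁, hk₁⟩, ⟨h₁, hh₁⟩)) (a₂ := (⟨k₂, hk₂⟩, ⟨h₂, hh₂⟩))
      heq)

theorem exists_mul_mem_mul_right_iff {x a : G} (ha : a ∈ H) :
    (∃ k ∈ K, ∃ h ∈ H, x * a = k * h) ↔ ∃ k ∈ K, ∃ h ∈ H, x = k * h := by
  constructor
  · rintro ⟨k, hk, h, hh, he⟩
    refine ⟨k, hk, h * a⁻¹, H.mul_mem hh (H.inv_mem ha), ?_⟩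
    rw [← mul_assoc, ← he, mul_inv_cancel_right]
  · rintro ⟨k, hk, h, hh, he⟩
    exact ⟨k, hk, h * a, H.mul_mem hh ha, by rw [he, mul_assoc]⟩

end Subgroup

theorem double_groupoid_partial_left_action
    {G : Type*} [Group G] (H K : Subgroup G) (hHK : H ⊓ K = ⊥) :
    -- (e, k) ∈ Ω and e ▷ k = k for all k ∈ K
    (∀ k : G, k ∈ K → ((1 : G) * k = k * 1 ∧
      ∀ p a : G, p ∈ K → a ∈ H → (1 : G) * k = p * a → p = k)) ∧
    -- if (h₂, k) ∈ Ω then (h₁, h₂ ▷ k) ∈ Ω iff (h₁ h₂, k) ∈ Ω,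
    -- in which case h₁ ▷ (h₂ ▷ k) = (h₁ h₂) ▷ k
    (∀ h₁ h₂ k k₂ a₂ : G, h₁ ∈ H → h₂ ∈ H → k ∈ K → k₂ ∈ K → a₂ ∈ H →
      h₂ * k = k₂ * a₂ →
      (((∃ k' ∈ K, ∃ h' ∈ H, h₁ * k₂ = k' * h') ↔
        (∃ k' ∈ K, ∃ h' ∈ H, (h₁ * h₂) * k = k' * h')) ∧
       (∀ k' a' k'' a'' : G, k' ∈ K → a' ∈ H → k'' ∈ K → a'' ∈ H →
         h₁ * k₂ = k' * a' → (h₁ * h₂) * k = k'' * a'' → k' = k''))) := by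
  have hKH : Disjoint K H := (disjoint_iff.mpr hHK).symm
  refine ⟨fun k hk => ⟨by rw [one_mul, mul_one], fun p a hp ha he => ?_⟩, ?_⟩
  · exact Subgroup.left_eq_of_mul_eq_mul_of_disjoint hKH hp hk ha H.one_mem
      (by rw [← he, one_mul, mul_one])
  intro h₁ h₂ k k₂ a₂ _ _ _ _ ha₂ hk₂
  have hprod : h₁ * h₂ * k = h₁ * k₂ * a₂ := by rw [mul_assoc, hk₂, mul_assoc]
  refine ⟨by rw [hprod]; exact (Subgroup.exists_mul_mem_mul_right_iff ha₂).symm, ?_⟩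
  intro k' a' k'' a'' hk' ha' hk'' ha'' he' he''
  refine Subgroup.left_eq_of_mul_eq_mul_of_disjoint hKH hk' hk'' (H.mul_mem ha' ha₂) ha'' ?_
  rw [← mul_assoc, ← he', ← hprod, he'']
end

section
/- Let 𝒢 = 𝒢(H,K) be the double groupoid of an admissible pair, with operations (h₁, h₂ ▷ k₂)·(h₂,k₂) = (h₁h₂, k₂) and (h,k)⁻¹ = (h⁻¹, h ▷ k). Then the map γ: 𝒢 → 𝒢 defined by γ(h,k) = (h ◁ k, k⁻¹) is an involutive groupoid automorphism of 𝒢, i.e., γ ∘ γ = id, γ maps composable pairs to composable pairs, and γ((h₁,k₁)(h₂,k₂)) = γ(h₁,k₁)γ(h₂,k₂) whenever the product is defined. -/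
/-! Every identity reduces to the uniqueness of the factorization `g = k * h` with `k ∈ K`,
`h ∈ H`, which holds because `H ∩ K` is trivial. Involutivity: `(h ◁ k) * k⁻¹ = (h ▷ k)⁻¹ * h`
is a factorization of `(h ◁ k) * k⁻¹`, so `γ (γ (h, k)) = (h, k)`. Multiplicativity: with
`h₂ * k₂ = p₂ * a₂` and `h₁ * p₂ = p₁ * a₁`, the product `h₁ * h₂ * k₂ = p₁ * (a₁ * a₂)`
is a factorization, so `(h₁ * h₂) ◁ k₂ = (h₁ ◁ (h₂ ▷ k₂)) * (h₂ ◁ k₂)`. -/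

theorem mul_inv_eq_inv_mul_of_mul_eq {G : Type*} [Group G] {h k p a : G}
    (hka : h * k = p * a) : a * k⁻¹ = p⁻¹ * h := by
  rw [mul_inv_eq_iff_eq_mul, mul_assoc, eq_inv_mul_iff_mul_eq, hka]

theorem Subgroup.eq_and_eq_of_mul_eq_mul {G : Type*} [Group G] {K H : Subgroup G}
    (hKH : Disjoint K H) {p q a b : G} (hp : p ∈ K) (hq : q ∈ K) (ha : a ∈ H) (hb : b ∈ H)
    (h : p * a = q * b) : p = q ∧ a = b := by
  simpa [Prod.ext_iff] using
    mul_injective_of_disjoint hKH (a₁ := (⟨p, hp⟩, ⟨a, ha⟩)) (a₂ := (⟨q, hq⟩, ⟨b, hb⟩)) h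

theorem double_groupoid_gamma_automorphism
    {G : Type*} [Group G] (H K : Subgroup G) (hHK : H ⊓ K = ⊥) :
    -- γ(h,k) = (h ◁ k, k⁻¹) is well defined: (h ◁ k) k⁻¹ = (h ▷ k)⁻¹ h ∈ KH,
    -- so (h ◁ k) ▷ k⁻¹ = (h ▷ k)⁻¹ and (h ◁ k) ◁ k⁻¹ = h
    (∀ h k p a : G, h ∈ H → k ∈ K → p ∈ K → a ∈ H → h * k = p * a →
      a * k⁻¹ = p⁻¹ * h) ∧
    -- γ ∘ γ = id
    (∀ h k p a q b : G, h ∈ H → k ∈ K → p ∈ K → a ∈ H → q ∈ K → b ∈ H →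
      h * k = p * a → a * k⁻¹ = q * b → q = p⁻¹ ∧ b = h) ∧
    -- γ maps composable pairs to composable pairs and is multiplicative:
    -- for (h₁, h₂ ▷ k₂) · (h₂, k₂) = (h₁ h₂, k₂),
    -- γ(h₁ h₂, k₂) = γ(h₁, h₂ ▷ k₂) · γ(h₂, k₂)
    (∀ h₁ h₂ k₂ p₂ a₂ p₁ a₁ q b : G,
      h₁ ∈ H → h₂ ∈ H → k₂ ∈ K → p₂ ∈ K → a₂ ∈ H → p₁ ∈ K → a₁ ∈ H → q ∈ K → b ∈ H →
      h₂ * k₂ = p₂ * a₂ → h₁ * p₂ = p₁ * a₁ → (h₁ * h₂) * k₂ = q * b →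
      a₂ * k₂⁻¹ = p₂⁻¹ * h₂ ∧ q = p₁ ∧ b = a₁ * a₂) := by
  have hKH : Disjoint K H := (disjoint_iff.mpr hHK).symm
  refine ⟨fun h k p a _ _ _ _ => mul_inv_eq_inv_mul_of_mul_eq, ?_, ?_⟩
  · intro h k p a q b hh _ hp _ hq hb hka hγ
    rw [mul_inv_eq_inv_mul_of_mul_eq hka] at hγ
    obtain ⟨rfl, rfl⟩ :=
      Subgroup.eq_and_eq_of_mul_eq_mul hKH (K.inv_mem hp) hq hh hb hγ
    exact ⟨rfl, rfl⟩
  · intro h₁ h₂ k₂ p₂ a₂ p₁ a₁ q b _ _ _ _ ha₂ hp₁ ha₁ hq hb h₂k₂ h₁p₂ hq_b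
    have h_prod : (h₁ * h₂) * k₂ = p₁ * (a₁ * a₂) := by
      rw [mul_assoc, h₂k₂, ← mul_assoc, h₁p₂, mul_assoc]
    refine ⟨mul_inv_eq_inv_mul_of_mul_eq h₂k₂, ?_⟩
    rw [hq_b] at h_prod
    exact Subgroup.eq_and_eq_of_mul_eq_mul hKH hq hp₁ hb (H.mul_mem ha₁ ha₂) h_prod
end

section
/- Let 𝒜 be a unital ring with group of units 𝒜*, and let G = 𝒜* × 𝒜 be the group with multiplication (a,x)(b,y) = (ab, x + ay) and identity (1,0). Let H = {(a, a−1) : a ∈ 𝒜*} and K = {(b,0) : b ∈ 𝒜*}. Then H and K are subgroups of G, H ∩ K = {(1,0)}, and HK = {(a,x) ∈ G : 1 + x ∈ 𝒜*}. -/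
/-!
Read `(a, x)` as the affine map `t ↦ a t + x` of `𝒜`; then the group law is composition, `H` is the
stabilizer of `-1` and `K` the stabilizer of `0`. A product `h k` with `k ∈ K` sends `0` to `h 0`,
and `h 0 = a - 1` for `h = (a, a - 1)`, so `(a, x) ∈ HK` exactly when `x = u - 1` for a unit `u`.
-/

/-- Multiplication of the group `G = 𝒜* × 𝒜`, `(a,x)(b,y) = (ab, x + ay)`. -/
def rgMul {A : Type*} [Ring A] (p q : Aˣ × A) : Aˣ × A :=
  (p.1 * q.1, p.2 + (p.1 : A) * q.2)

/-- Inversion in `G = 𝒜* × 𝒜`, `(a,x)⁻¹ = (a⁻¹, -a⁻¹x)`. -/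
def rgInv {A : Type*} [Ring A] (p : Aˣ × A) : Aˣ × A :=
  (p.1⁻¹, -(((p.1⁻¹ : Aˣ) : A) * p.2))

/-- The identity `(1,0)` of `G = 𝒜* × 𝒜`. -/
def rgOne (A : Type*) [Ring A] : Aˣ × A := (1, 0)

/-- The subgroup `H = {(a, a-1) : a ∈ 𝒜*}`. -/
def rgH (A : Type*) [Ring A] : Set (Aˣ × A) := {p | p.2 = (p.1 : A) - 1}

/-- The subgroup `K = {(b, 0) : b ∈ 𝒜*}`. -/
def rgK (A : Type*) [Ring A] : Set (Aˣ × A) := {p | p.2 = 0}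


section

variable {A : Type*} [Ring A]

theorem rgOne_mem_rgH : rgOne A ∈ rgH A := by
  simp [rgOne, rgH]

theorem rgMul_mem_rgH {p q : Aˣ × A} (hp : p ∈ rgH A) (hq : q ∈ rgH A) :
    rgMul p q ∈ rgH A := by
  simp only [rgH, Set.mem_ofPred_eq, rgMul, Units.val_mul] at *
  rw [hp, hq, mul_sub, mul_one]
  abel

theorem rgInv_mem_rgH {p : Aˣ × A} (hp : p ∈ rgH A) : rgInv p ∈ rgH A := by
  simp only [rgH, Set.mem_ofPred_eq, rgInv] at *
  rw [hp, mul_sub, Units.inv_mul, mul_one, neg_sub]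

theorem rgOne_mem_rgK : rgOne A ∈ rgK A := rfl

theorem rgMul_snd_of_mem_rgK (p : Aˣ × A) {q : Aˣ × A} (hq : q ∈ rgK A) :
    (rgMul p q).2 = p.2 := by
  simp only [rgK, Set.mem_ofPred_eq] at hq
  simp [rgMul, hq]

theorem rgMul_mem_rgK {p q : Aˣ × A} (hp : p ∈ rgK A) (hq : q ∈ rgK A) :
    rgMul p q ∈ rgK A :=
  (rgMul_snd_of_mem_rgK p hq).trans hp

theorem rgInv_mem_rgK {p : Aˣ × A} (hp : p ∈ rgK A) : rgInv p ∈ rgK A := by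
  simp only [rgK, Set.mem_ofPred_eq] at *
  simp [rgInv, hp]

theorem rgH_inter_rgK : rgH A ∩ rgK A = {rgOne A} := by
  ext ⟨a, x⟩
  simp only [rgH, rgK, rgOne, Set.mem_inter_iff, Set.mem_ofPred_eq, Set.mem_singleton_iff,
    Prod.mk.injEq]
  constructor
  · rintro ⟨ha, rfl⟩
    exact ⟨Units.ext (sub_eq_zero.mp ha.symm), rfl⟩
  · rintro ⟨rfl, rfl⟩
    simp

theorem rgMul_rgH_rgK (u b : Aˣ) : rgMul (u, (u : A) - 1) (b, 0) = (u * b, (u : A) - 1) := by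
  simp [rgMul]

theorem rgH_mul_rgK :
    {g | ∃ h ∈ rgH A, ∃ k ∈ rgK A, g = rgMul h k} = {p : Aˣ × A | IsUnit ((1 : A) + p.2)} := by
  ext g
  simp only [Set.mem_ofPred_eq]
  constructor
  · rintro ⟨h, hh, k, hk, hg⟩
    rw [hg, rgMul_snd_of_mem_rgK h hk, hh, add_sub_cancel]
    exact h.1.isUnit
  · rintro ⟨u, hu⟩
    refine ⟨(u, (u : A) - 1), rfl, (u⁻¹ * g.1, 0), rfl, ?_⟩
    rw [rgMul_rgH_rgK, mul_inv_cancel_left, hu, add_sub_cancel_left]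

end

theorem ring_example_subgroups_and_HK
    (A : Type*) [Ring A] :
    -- H is a subgroup
    (rgOne A ∈ rgH A ∧ (∀ p ∈ rgH A, ∀ q ∈ rgH A, rgMul p q ∈ rgH A) ∧
      ∀ p ∈ rgH A, rgInv p ∈ rgH A) ∧
    -- K is a subgroup
    (rgOne A ∈ rgK A ∧ (∀ p ∈ rgK A, ∀ q ∈ rgK A, rgMul p q ∈ rgK A) ∧
      ∀ p ∈ rgK A, rgInv p ∈ rgK A) ∧
    -- H ∩ K = {(1,0)}
    (rgH A ∩ rgK A = {rgOne A}) ∧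
    -- HK = {(a,x) : 1 + x invertible}
    ({g | ∃ h ∈ rgH A, ∃ k ∈ rgK A, g = rgMul h k}
      = {p : Aˣ × A | IsUnit ((1 : A) + p.2)}) :=
  ⟨⟨rgOne_mem_rgH, fun _ hp _ hq => rgMul_mem_rgH hp hq, fun _ => rgInv_mem_rgH⟩,
    ⟨rgOne_mem_rgK, fun _ hp _ hq => rgMul_mem_rgK hp hq, fun _ => rgInv_mem_rgK⟩,
    rgH_inter_rgK, rgH_mul_rgK⟩
end

section
/- With G = 𝒜* × 𝒜, H = {(a,a−1) : a ∈ 𝒜*}, K = {(b,0) : b ∈ 𝒜*} as above: for a, b ∈ 𝒜*, the element (a,a−1)(b,0) lies in KH if and only if a(b−1)+1 ∈ 𝒜*, and in that case (a,a−1) ▷ (b,0) = (a(b−1)+1, 0) and (a,a−1) ◁ (b,0) = ((a(b−1)+1)⁻¹ab, (a(b−1)+1)⁻¹ab − 1). -/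
/-! A product `(c, 0)(d, d - 1)` in `KH` equals `(cd, cd - c)`, while `(a, a - 1)(b, 0) = (ab, a - 1)`.
Comparing components forces `cd = ab` and `c = ab - a + 1 = a(b - 1) + 1`, so `c` is this unit and
`d = c⁻¹ab`; conversely these choices work whenever `a(b - 1) + 1` is a unit. -/

section

variable {A : Type*} [Ring A]

theorem rgMul_mk_sub_one_mk_zero (a b : Aˣ) :
    rgMul (a, (a : A) - 1) (b, 0) = (a * b, (a : A) - 1) := by
  simp [rgMul]

theorem rgMul_mk_zero_mk_sub_one (c d : Aˣ) :
    rgMul (c, 0) (d, (d : A) - 1) = (c * d, (c : A) * d - c) := by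
  simp [rgMul, mul_sub]

theorem rgMul_mk_sub_one_mk_zero_eq_iff (a b c d : Aˣ) :
    rgMul (a, (a : A) - 1) (b, 0) = rgMul (c, 0) (d, (d : A) - 1) ↔
      a * b = c * d ∧ (c : A) = a * (b - 1) + 1 := by
  rw [rgMul_mk_sub_one_mk_zero, rgMul_mk_zero_mk_sub_one, Prod.mk.injEq]
  refine and_congr_right fun hcd => ?_
  have hcd' : (c : A) * d = a * b := by exact_mod_cast hcd.symm
  rw [hcd', mul_sub_one]
  constructor <;> intro h <;> linear_combination (norm := noncomm_ring) h

theorem rgMul_mk_sub_one_mk_zero_eq (a b u : Aˣ) (hu : (u : A) = a * (b - 1) + 1) :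
    rgMul (a, (a : A) - 1) (b, 0) = rgMul (u, 0) (u⁻¹ * a * b, ((u⁻¹ * a * b : Aˣ) : A) - 1) :=
  (rgMul_mk_sub_one_mk_zero_eq_iff a b u _).2 ⟨by group, hu⟩

end

theorem ring_example_local_actions
    (A : Type*) [Ring A] (a b : Aˣ) :
    -- (a, a−1)(b, 0) ∈ KH iff a(b−1)+1 is invertible
    ((∃ k ∈ rgK A, ∃ h ∈ rgH A, rgMul (a, (a : A) - 1) (b, (0 : A)) = rgMul k h)
      ↔ IsUnit ((a : A) * ((b : A) - 1) + 1)) ∧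
    -- in that case, (a,a−1) ▷ (b,0) = (a(b−1)+1, 0) and
    -- (a,a−1) ◁ (b,0) = ((a(b−1)+1)⁻¹ab, (a(b−1)+1)⁻¹ab − 1)
    (∀ u : Aˣ, (u : A) = (a : A) * ((b : A) - 1) + 1 →
      rgMul (a, (a : A) - 1) (b, (0 : A))
        = rgMul ((u, (0 : A)) : Aˣ × A)
            ((u⁻¹ * a * b : Aˣ), ((u⁻¹ * a * b : Aˣ) : A) - 1)) := by
  refine ⟨⟨?_, ?_⟩, rgMul_mk_sub_one_mk_zero_eq a b⟩
  · rintro ⟨⟨c, _⟩, rfl : _ = (0 : A), ⟨d, _⟩, rfl : _ = (d : A) - 1, hkh⟩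
    rw [← ((rgMul_mk_sub_one_mk_zero_eq_iff a b c d).1 hkh).2]
    exact c.isUnit
  · rintro ⟨u, hu⟩
    exact ⟨_, rfl, _, rfl, rgMul_mk_sub_one_mk_zero_eq a b u hu⟩
end

section
/- Let G = SL₃(ℤ), H the subgroup of matrices of block form [[4n₁+1, 2n₂, 0],[2n₃, 4n₄+1, 0],[0,0,1]] with determinant 1 (Sanov's copy of F₂), and K = {B_x : x ∈ ℤ} where B_x = [[1,0,0],[0,1,x],[0,0,1]]. Then for A ∈ H with upper-right 2×2 entry 2n₂ and lower-middle diagonal entry 4n₄+1, and x ∈ ℤ: A·B_x ∈ KH if and only if n₂·x = 0, and in that case A ▷ B_x = B_{(4n₄+1)x} and A ◁ B_x = A. -/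
open Matrix

/-- The matrices of Sanov's copy of `F₂` inside `SL₃(ℤ)`. -/
def hMat (n₁ n₂ n₃ n₄ : ℤ) : Matrix (Fin 3) (Fin 3) ℤ :=
  !![4*n₁+1, 2*n₂, 0; 2*n₃, 4*n₄+1, 0; 0, 0, 1]

/-- The matrices `B_x` forming the copy of `ℤ` inside `SL₃(ℤ)`. -/
def bMat (x : ℤ) : Matrix (Fin 3) (Fin 3) ℤ :=
  !![1, 0, 0; 0, 1, x; 0, 0, 1]

/-- The subgroup `H` (Sanov's copy of `F₂` in `SL₃(ℤ)`). -/
def sanovH : Set (Matrix (Fin 3) (Fin 3) ℤ) :=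
  {M | ∃ n₁ n₂ n₃ n₄ : ℤ, M = hMat n₁ n₂ n₃ n₄ ∧ M.det = 1}

/-- The subgroup `K ≅ ℤ`. -/
def intK : Set (Matrix (Fin 3) (Fin 3) ℤ) :=
  {M | ∃ x : ℤ, M = bMat x}

/-
`A · B_x` is `A` with third column `(2n₂x, (4n₄+1)x, 1)`, while `B_y · A'` is `A'` with third
column `(0, y, 1)`. Comparing the top-right entries forces `n₂x = 0`; conversely, if `n₂x = 0`
then `A · B_x = B_{(4n₄+1)x} · A`.
-/

lemma hMat_mul_bMat (n₁ n₂ n₃ n₄ x : ℤ) :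
    hMat n₁ n₂ n₃ n₄ * bMat x =
      !![4*n₁+1, 2*n₂, 2*n₂*x; 2*n₃, 4*n₄+1, (4*n₄+1)*x; 0, 0, 1] := by
  simp [hMat, bMat]

lemma bMat_mul_hMat (y n₁ n₂ n₃ n₄ : ℤ) :
    bMat y * hMat n₁ n₂ n₃ n₄ =
      !![4*n₁+1, 2*n₂, 0; 2*n₃, 4*n₄+1, y; 0, 0, 1] := by
  simp [hMat, bMat]

lemma hMat_mul_bMat_eq_of_mul_eq_zero (n₁ n₂ n₃ n₄ x : ℤ) (h : n₂ * x = 0) :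
    hMat n₁ n₂ n₃ n₄ * bMat x = bMat ((4*n₄+1) * x) * hMat n₁ n₂ n₃ n₄ := by
  rw [hMat_mul_bMat, bMat_mul_hMat, mul_assoc, h, mul_zero]

lemma mul_eq_zero_of_hMat_mul_bMat_eq (n₁ n₂ n₃ n₄ x y m₁ m₂ m₃ m₄ : ℤ)
    (h : hMat n₁ n₂ n₃ n₄ * bMat x = bMat y * hMat m₁ m₂ m₃ m₄) : n₂ * x = 0 := by
  have hcorner := congrFun (congrFun h 0) 2
  rw [hMat_mul_bMat, bMat_mul_hMat] at hcorner
  simpa using hcorner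

theorem sanov_example_partial_action
    (n₁ n₂ n₃ n₄ x : ℤ) (hdet : (hMat n₁ n₂ n₃ n₄).det = 1) :
    -- A·B_x ∈ KH iff n₂·x = 0
    ((∃ B ∈ intK, ∃ A' ∈ sanovH, hMat n₁ n₂ n₃ n₄ * bMat x = B * A') ↔ n₂ * x = 0) ∧
    -- and in that case A ▷ B_x = B_{(4n₄+1)x} and A ◁ B_x = A
    (n₂ * x = 0 →
      hMat n₁ n₂ n₃ n₄ * bMat x = bMat ((4*n₄+1) * x) * hMat n₁ n₂ n₃ n₄) := by
  refine ⟨⟨?_, fun h => ?_⟩, hMat_mul_bMat_eq_of_mul_eq_zero n₁ n₂ n₃ n₄ x⟩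
  · rintro ⟨_, ⟨y, rfl⟩, _, ⟨m₁, m₂, m₃, m₄, rfl, -⟩, heq⟩
    exact mul_eq_zero_of_hMat_mul_bMat_eq n₁ n₂ n₃ n₄ x y m₁ m₂ m₃ m₄ heq
  · exact ⟨_, ⟨_, rfl⟩, _, ⟨n₁, n₂, n₃, n₄, rfl, hdet⟩,
      hMat_mul_bMat_eq_of_mul_eq_zero n₁ n₂ n₃ n₄ x h⟩
end
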